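/- Let n ≥ 3, let S = (s_{ij}) be a positive definite real symmetric n×n matrix, and set W = S⁻¹. Let A be the symmetric n×n matrix that is zero outside the upper-left 2×2 block, whose upper-left 2×2 block equals diag(1/s₁₁, 1/s₂₂) − (1/(s₁₁s₂₂ − s₁₂²))·[[s₂₂, −s₁₂],[−s₁₂, s₁₁]], and define K̂ = W + A. Then K̂ is invertible, its inverse Σ̂ = K̂⁻¹ satisfies σ̂_{12} = 0, and the matrix K̂·S·K̂ − K̂ has all entries zero except possibly the (1,2) and (2,1) entries, i.e. K̂SK̂ − K̂ lies in the span of e₁e₂ᵀ + e₂e₁ᵀ. Hence Σ̂ is a solution of the maximum likelihood score equations for the model L = {Σ ∈ S^n : σ_{12} = 0}, given as a rational function of S. -/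

import Mathlib

/-!
Write `J = {1, 2}`, `S_JJ` for the corresponding block of `S`, `Δ = diag(s₁₁, s₂₂)` and `U` for
the inclusion of the coordinates `J`, so that `A = U (Δ⁻¹ - S_JJ⁻¹) Uᵀ`. Since
`1 + (Δ⁻¹ - S_JJ⁻¹) S_JJ = Δ⁻¹ S_JJ` is invertible, a Woodbury-type identity gives
`K̂⁻¹ = S - S U S_JJ⁻¹ (S_JJ - Δ) S_JJ⁻¹ Uᵀ S`, whose `J × J` block is `Δ`; in particular
`σ̂₁₂ = 0`. Moreover `K̂SK̂ - K̂ = A + ASA = U (Δ⁻¹ S_JJ Δ⁻¹ - Δ⁻¹) Uᵀ`, whose diagonal vanishes.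
Nothing here depends on `J` having two elements.
-/

open Matrix

/-- The correction matrix `A` from Example 6.3: zero outside the upper-left `2 × 2`
block, with upper-left block
`diag(1/s₁₁, 1/s₂₂) − (1/(s₁₁s₂₂ − s₁₂²)) [[s₂₂, −s₁₂], [−s₁₂, s₁₁]]`
(here the first two indices of `Fin (n+3)` play the role of `1, 2`). -/
noncomputable def correctionMatrix (n : ℕ)
    (S : Matrix (Fin (n + 3)) (Fin (n + 3)) ℝ) :
    Matrix (Fin (n + 3)) (Fin (n + 3)) ℝ :=
  let d : ℝ := S 0 0 * S 1 1 - S 0 1 ^ 2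
  Matrix.of fun i j =>
    if i = 0 ∧ j = 0 then 1 / S 0 0 - S 1 1 / d
    else if (i = 0 ∧ j = 1) ∨ (i = 1 ∧ j = 0) then S 0 1 / d
    else if i = 1 ∧ j = 1 then 1 / S 1 1 - S 0 0 / d
    else 0

theorem one_add_sub_mul_mul_eq {R : Type*} [Ring R] {d δ s t : R} (hdδ : d * δ = 1)
    (hts : t * s = 1) (hst : s * t = 1) :
    (1 + (d - t) * s) * (t * (s - δ) * t) = d - t := by
  have h1 : 1 + (d - t) * s = d * s := by rw [sub_mul, hts]; abel
  rw [h1, ← mul_assoc, ← mul_assoc, mul_assoc d s t, hst, mul_one, mul_sub, sub_mul, mul_assoc,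
    hst, mul_one, hdδ, one_mul]

theorem add_mul_mul_add_sub_add {R : Type*} [Ring R] {w s : R} (hws : w * s = 1)
    (hsw : s * w = 1) (a : R) :
    (w + a) * s * (w + a) - (w + a) = a + a * s * a := by
  have : (w + a) * s = 1 + a * s := by rw [add_mul, hws]
  rw [this, add_mul, one_mul, mul_add, mul_assoc a s w, hsw, mul_one]
  abel

theorem sub_add_sub_mul_mul_sub {R : Type*} [Ring R] {d s t : R} (hts : t * s = 1)
    (hst : s * t = 1) :
    (d - t) + (d - t) * s * (d - t) = d * s * d - d := by
  simp only [sub_mul, mul_sub, hts, mul_assoc, hst, mul_one]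
  simp only [← mul_assoc, one_mul]
  abel

namespace Matrix

variable {ι κ 𝕜 : Type*} [DecidableEq ι] [Field 𝕜]

theorem one_submatrix_mul_mul_one_submatrix_apply_eq_zero [Fintype κ] (e : κ → ι)
    (M : Matrix κ κ 𝕜) {i j : ι} (hM : ∀ k l, e k = i → e l = j → M k l = 0) :
    ((1 : Matrix ι ι 𝕜).submatrix id e * M * (1 : Matrix ι ι 𝕜).submatrix e id) i j = 0 := by
  simp only [mul_apply, submatrix_apply, id, one_apply, Finset.sum_mul]
  refine Finset.sum_eq_zero fun l _ => Finset.sum_eq_zero fun k _ => ?_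
  by_cases hk : i = e k
  · by_cases hl : e l = j
    · simp [hM k l hk.symm hl]
    · simp [hl]
  · simp [hk]

variable [Fintype ι]

theorem mul_one_submatrix_id {m : Type*} (e : κ → ι) (M : Matrix m ι 𝕜) :
    M * (1 : Matrix ι ι 𝕜).submatrix id e = M.submatrix id e := by
  simpa using mul_submatrix_one (Equiv.refl ι) e M

theorem one_submatrix_id_mul {m : Type*} (e : κ → ι) (M : Matrix ι m 𝕜) :
    (1 : Matrix ι ι 𝕜).submatrix e id * M = M.submatrix e id := by
  simpa using one_submatrix_mul e (Equiv.refl ι) M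

variable [Fintype κ] [DecidableEq κ]

theorem add_mul_mul_mul_sub_eq_one {S W : Matrix ι ι 𝕜} (hWS : W * S = 1)
    {U : Matrix ι κ 𝕜} {V : Matrix κ ι 𝕜} {S₀ B Y : Matrix κ κ 𝕜} (hS₀ : V * S * U = S₀)
    (hY : (1 + B * S₀) * Y = B) :
    (W + U * B * V) * (S - S * U * Y * (V * S)) = 1 := by
  have key : (W + U * B * V) * (S - S * U * Y * (V * S))
      = 1 + U * (B - (1 + B * (V * S * U)) * Y) * (V * S) := by
    have hW : ∀ X : Matrix ι ι 𝕜, W * (S * X) = X := fun X => by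
      rw [← Matrix.mul_assoc, hWS, Matrix.one_mul]
    simp only [Matrix.mul_add, Matrix.add_mul, Matrix.mul_sub, Matrix.sub_mul, Matrix.mul_assoc,
      Matrix.one_mul, hW, hWS]
    abel
  rw [key, hS₀, hY, sub_self, Matrix.mul_zero, Matrix.zero_mul, add_zero]

noncomputable def blockCorrection (e : κ → ι) (S : Matrix ι ι 𝕜) : Matrix ι ι 𝕜 :=
  (1 : Matrix ι ι 𝕜).submatrix id e *
    (diagonal (fun k => (S (e k) (e k))⁻¹) - (S.submatrix e e)⁻¹) *
    (1 : Matrix ι ι 𝕜).submatrix e id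

/-- Woodbury without inverting `Δ⁻¹ - S_JJ⁻¹`, which is singular when `S_JJ` is diagonal: it
suffices that `1 + (Δ⁻¹ - S_JJ⁻¹) S_JJ = Δ⁻¹ S_JJ` is invertible. -/
theorem inv_add_blockCorrection_mul_eq_one (e : κ → ι) {S : Matrix ι ι 𝕜} (hS : IsUnit S.det)
    (hS₀ : IsUnit (S.submatrix e e).det) (hdiag : ∀ k, S (e k) (e k) ≠ 0) :
    (S⁻¹ + blockCorrection e S) * (S - S.submatrix id e *
      ((S.submatrix e e)⁻¹ * (S.submatrix e e - diagonal fun k => S (e k) (e k)) *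
        (S.submatrix e e)⁻¹) * S.submatrix e id) = 1 := by
  have hY := one_add_sub_mul_mul_eq (d := diagonal fun k => (S (e k) (e k))⁻¹)
    (δ := diagonal fun k => S (e k) (e k))
    (by rw [diagonal_mul_diagonal, ← diagonal_one]; simp [hdiag])
    (nonsing_inv_mul _ hS₀) (mul_nonsing_inv _ hS₀)
  have := add_mul_mul_mul_sub_eq_one (nonsing_inv_mul S hS)
    (by rw [one_submatrix_id_mul, mul_one_submatrix_id]; rfl) hY
  rwa [mul_one_submatrix_id, one_submatrix_id_mul] at this

theorem isUnit_det_inv_add_blockCorrection (e : κ → ι) {S : Matrix ι ι 𝕜} (hS : IsUnit S.det)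
    (hS₀ : IsUnit (S.submatrix e e).det) (hdiag : ∀ k, S (e k) (e k) ≠ 0) :
    IsUnit (S⁻¹ + blockCorrection e S).det :=
  isUnit_det_of_right_inverse (inv_add_blockCorrection_mul_eq_one e hS hS₀ hdiag)

theorem submatrix_inv_add_blockCorrection (e : κ → ι) {S : Matrix ι ι 𝕜} (hS : IsUnit S.det)
    (hS₀ : IsUnit (S.submatrix e e).det) (hdiag : ∀ k, S (e k) (e k) ≠ 0) :
    (S⁻¹ + blockCorrection e S)⁻¹.submatrix e e = diagonal fun k => S (e k) (e k) := by
  rw [inv_eq_right_inv (inv_add_blockCorrection_mul_eq_one e hS hS₀ hdiag),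
    show ∀ A B : Matrix ι ι 𝕜, (A - B).submatrix e e = A.submatrix e e - B.submatrix e e
      from fun _ _ => rfl,
    submatrix_mul _ _ _ id _ Function.bijective_id, submatrix_mul _ _ _ id _ Function.bijective_id]
  simp only [submatrix_submatrix, Function.comp_id, Function.id_comp, submatrix_id_id]
  set S₀ := S.submatrix e e
  rw [← Matrix.mul_assoc, ← Matrix.mul_assoc, mul_nonsing_inv _ hS₀, Matrix.one_mul,
    Matrix.mul_assoc, nonsing_inv_mul _ hS₀, Matrix.mul_one, sub_sub_cancel]

theorem inv_add_blockCorrection_residual_apply (e : κ → ι) {S : Matrix ι ι 𝕜}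
    (hS : IsUnit S.det) (hS₀ : IsUnit (S.submatrix e e).det) (hdiag : ∀ k, S (e k) (e k) ≠ 0)
    {i j : ι} (hij : ∀ k l, e k = i → e l = j → k = l) :
    ((S⁻¹ + blockCorrection e S) * S * (S⁻¹ + blockCorrection e S) -
      (S⁻¹ + blockCorrection e S)) i j = 0 := by
  set D : Matrix κ κ 𝕜 := diagonal fun k => (S (e k) (e k))⁻¹
  set U := (1 : Matrix ι ι 𝕜).submatrix id e
  set V := (1 : Matrix ι ι 𝕜).submatrix e id
  have hVSU : V * S * U = S.submatrix e e := by
    rw [one_submatrix_id_mul, mul_one_submatrix_id]; rfl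
  have hASA : blockCorrection e S + blockCorrection e S * S * blockCorrection e S =
      U * (D * S.submatrix e e * D - D) * V := calc
    _ = U * ((D - (S.submatrix e e)⁻¹) + (D - (S.submatrix e e)⁻¹) * (V * S * U) *
          (D - (S.submatrix e e)⁻¹)) * V := by
      simp only [blockCorrection, Matrix.mul_add, Matrix.add_mul, Matrix.mul_assoc]
      rfl
    _ = _ := by
      rw [hVSU, sub_add_sub_mul_mul_sub (nonsing_inv_mul _ hS₀) (mul_nonsing_inv _ hS₀)]
  rw [add_mul_mul_add_sub_add (nonsing_inv_mul S hS) (mul_nonsing_inv S hS), hASA]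
  refine one_submatrix_mul_mul_one_submatrix_apply_eq_zero e _ fun k l hk hl => ?_
  obtain rfl := hij k l hk hl
  simp [D, diagonal_mul, mul_diagonal, hdiag]

end Matrix

theorem correctionMatrix_eq_blockCorrection (n : ℕ) (S : Matrix (Fin (n + 3)) (Fin (n + 3)) ℝ)
    (hS : S 1 0 = S 0 1) :
    correctionMatrix n S = blockCorrection ![0, 1] S := by
  ext i j
  simp only [blockCorrection, inv_def, adjugate_fin_two, Ring.inverse_eq_inv', det_fin_two,
    mul_apply, Fin.sum_univ_two, submatrix_apply, id, one_apply]
  by_cases hi0 : i = 0 <;> by_cases hi1 : i = 1 <;> by_cases hj0 : j = 0 <;> by_cases hj1 : j = 1 <;>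
    simp_all [correctionMatrix, div_eq_mul_inv, sq, mul_comm, eq_comm]

/-- For `n ≥ 3`, positive definite data `S`, `W = S⁻¹`, and `K̂ = W + A` with `A` the
explicit correction matrix, the matrix `K̂` is invertible, its inverse `Σ̂ = K̂⁻¹`
satisfies `σ̂₁₂ = 0`, and `K̂SK̂ − K̂` vanishes in all entries except possibly the
`(1,2)` and `(2,1)` entries, i.e. it lies in the span of `e₁e₂ᵀ + e₂e₁ᵀ`.  Hence `Σ̂`
solves the ML score equations for the model `L = {Σ : σ₁₂ = 0}`, as a rational function
of `S`. -/
theorem rational_MLE_one_zero_restriction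
    (n : ℕ) (S : Matrix (Fin (n + 3)) (Fin (n + 3)) ℝ) (hS : S.PosDef) :
    IsUnit (S⁻¹ + correctionMatrix n S).det ∧
    (S⁻¹ + correctionMatrix n S)⁻¹ 0 1 = 0 ∧
    ∀ i j : Fin (n + 3), ¬((i = 0 ∧ j = 1) ∨ (i = 1 ∧ j = 0)) →
      ((S⁻¹ + correctionMatrix n S) * S * (S⁻¹ + correctionMatrix n S)
        - (S⁻¹ + correctionMatrix n S)) i j = 0 := by
  set e : Fin 2 → Fin (n + 3) := ![0, 1]
  have he : Function.Injective e := by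
    intro k l h
    fin_cases k <;> fin_cases l <;> simp_all [e]
  have hdet : IsUnit S.det := (isUnit_iff_isUnit_det S).mp hS.isUnit
  have hdet₀ : IsUnit (S.submatrix e e).det :=
    (isUnit_iff_isUnit_det _).mp (hS.submatrix he).isUnit
  have hdiag : ∀ k, S (e k) (e k) ≠ 0 := fun k => hS.diag_pos.ne'
  rw [correctionMatrix_eq_blockCorrection n S (by simpa using hS.isHermitian.apply 0 1)]
  refine ⟨isUnit_det_inv_add_blockCorrection e hdet hdet₀ hdiag, ?_, fun i j hij => ?_⟩
  · simpa [e] using congr_fun₂ (submatrix_inv_add_blockCorrection e hdet hdet₀ hdiag) 0 1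
  · refine inv_add_blockCorrection_residual_apply e hdet hdet₀ hdiag fun k l hk hl => ?_
    fin_cases k <;> fin_cases l <;> simp_all [e]
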